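/- A prime number p satisfies p ≡ 1 (mod 3) if and only if there exist unique positive integers x and y such that p = x² + 3y² (i.e., there is exactly one pair (x, y) of positive integers with p = x² + 3y²). -/

import Mathlib

/-!
A prime `p ≡ 1 (mod 3)` has a square root `z` of `-3` modulo `p`, namely `2ω + 1` for a primitive
cube root of unity `ω`. Thue's pigeonhole lemma gives `x ≡ z y (mod p)` with `|x|, |y| < √p`, so
`x² + 3y²` is a multiple `kp` with `k ∈ {1, 2, 3}`; `k = 2` is impossible modulo 4 and `k = 3`
descends to `k = 1`. Uniqueness comes from the identities
`p² = (ac ∓ 3bd)² + 3(ad ± bc)²` for two representations `p = a² + 3b² = c² + 3d²`: since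
`p ∣ (ad - bc)(ad + bc)`, one of `ad ± bc` is a multiple of `p` of absolute value below `p`.
Conversely, `x² + 3y² > 3` is prime to 3 and congruent to the square `x²`, so it is `1 (mod 3)`.
-/

theorem ZMod.exists_sq_eq_neg_three {p : ℕ} [Fact p.Prime] (h : p % 3 = 1) :
    ∃ z : ZMod p, z ^ 2 = -3 := by
  have : Fact (Nat.Prime 3) := ⟨Nat.prime_three⟩
  obtain ⟨u, hu⟩ := exists_prime_orderOf_dvd_card 3 (G := (ZMod p)ˣ) (by
    rw [ZMod.card_units]
    omega)
  have hω : IsPrimitiveRoot (u : ZMod p) 3 :=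
    IsPrimitiveRoot.coe_units_iff.mpr (hu ▸ IsPrimitiveRoot.orderOf u)
  have hsum := hω.geom_sum_eq_zero (by norm_num)
  simp only [Finset.sum_range_succ, Finset.sum_range_zero] at hsum
  exact ⟨2 * u + 1, by linear_combination 4 * hsum⟩

theorem ZMod.exists_abs_le_sqrt_intCast_eq_mul {n : ℕ} [NeZero n] (z : ZMod n) :
    ∃ x y : ℤ, (x, y) ≠ 0 ∧ |x| ≤ n.sqrt ∧ |y| ≤ n.sqrt ∧ (x : ZMod n) = z * y := by
  have hcard : Fintype.card (ZMod n) < Fintype.card (Fin (n.sqrt + 1) × Fin (n.sqrt + 1)) := by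
    simpa [ZMod.card, ← sq] using Nat.lt_succ_sqrt' n
  obtain ⟨⟨a₁, b₁⟩, ⟨a₂, b₂⟩, hne, heq⟩ := Fintype.exists_ne_map_eq_of_card_lt
    (fun ab : Fin (n.sqrt + 1) × Fin (n.sqrt + 1) => ((ab.1 : ℕ) : ZMod n) - z * (ab.2 : ℕ)) hcard
  refine ⟨(a₁ : ℤ) - a₂, (b₁ : ℤ) - b₂, ?_, ?_, ?_, ?_⟩
  · intro h
    simp only [Prod.mk_eq_zero, sub_eq_zero, Nat.cast_inj, Fin.val_inj] at h
    exact hne (Prod.ext h.1 h.2)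
  · exact abs_le.mpr ⟨by omega, by omega⟩
  · exact abs_le.mpr ⟨by omega, by omega⟩
  · push_cast
    linear_combination heq

theorem Int.sq_add_three_mul_sq_ne_two_mul_of_odd (a b : ℤ) {m : ℤ} (hm : Odd m) :
    a ^ 2 + 3 * b ^ 2 ≠ 2 * m := by
  obtain ⟨k, rfl⟩ := hm
  intro h
  have hmod4 : ∀ u v w : ZMod 4, u ^ 2 + 3 * v ^ 2 ≠ 2 * (2 * w + 1) := by decide
  exact hmod4 a b k (by exact_mod_cast congrArg (Int.cast : ℤ → ZMod 4) h)

theorem Int.exists_eq_sq_add_three_mul_sq_of_three_mul {a b m : ℤ}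
    (h : a ^ 2 + 3 * b ^ 2 = 3 * m) : ∃ c, m = b ^ 2 + 3 * c ^ 2 := by
  obtain ⟨c, rfl⟩ : (3 : ℤ) ∣ a :=
    Int.prime_three.dvd_of_dvd_pow (n := 2) ⟨m - b ^ 2, by linarith⟩
  exact ⟨c, by linarith⟩

theorem Nat.sqrt_sq_lt_of_not_isSquare {n : ℕ} (hn : ¬IsSquare n) : n.sqrt ^ 2 < n :=
  (Nat.sqrt_le' n).lt_of_ne fun h => hn ⟨n.sqrt, by rw [← sq, h]⟩

theorem Nat.Prime.exists_eq_sq_add_three_mul_sq {p : ℕ} (hp : p.Prime) (h : p % 3 = 1) :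
    ∃ a b : ℤ, (p : ℤ) = a ^ 2 + 3 * b ^ 2 := by
  have : Fact p.Prime := ⟨hp⟩
  obtain ⟨z, hz⟩ := ZMod.exists_sq_eq_neg_three h
  obtain ⟨x, y, hxy, hx, hy, hxz⟩ := ZMod.exists_abs_le_sqrt_intCast_eq_mul z
  obtain ⟨k, hk⟩ : (p : ℤ) ∣ x ^ 2 + 3 * y ^ 2 := by
    rw [← ZMod.intCast_zmod_eq_zero_iff_dvd]
    push_cast
    linear_combination ((x : ZMod p) + z * y) * hxz + (y : ZMod p) ^ 2 * hz
  have hsqrt : (p.sqrt : ℤ) ^ 2 < p := by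
    exact_mod_cast Nat.sqrt_sq_lt_of_not_isSquare (Irreducible.not_isSquare hp)
  have hx2 : x ^ 2 < p := lt_of_le_of_lt (sq_le_sq' (abs_le.mp hx).1 (abs_le.mp hx).2) hsqrt
  have hy2 : y ^ 2 < p := lt_of_le_of_lt (sq_le_sq' (abs_le.mp hy).1 (abs_le.mp hy).2) hsqrt
  have hpos : 0 < x ^ 2 + 3 * y ^ 2 := by
    rcases eq_or_ne x 0 with rfl | hx0
    · have hy0 : y ≠ 0 := fun hy0 => hxy (by simp [hy0])
      positivity
    · positivity
  have hp0 : (0 : ℤ) < p := by exact_mod_cast hp.pos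
  have hk1 : 1 ≤ k := by nlinarith
  have hk3 : k ≤ 3 := by nlinarith
  interval_cases k
  · exact ⟨x, y, by linarith⟩
  · have hodd : Odd (p : ℤ) := by
      exact_mod_cast hp.odd_of_ne_two (by omega)
    exact absurd (hk.trans (mul_comm _ _)) (Int.sq_add_three_mul_sq_ne_two_mul_of_odd x y hodd)
  · obtain ⟨c, hc⟩ := Int.exists_eq_sq_add_three_mul_sq_of_three_mul (hk.trans (mul_comm _ _))
    exact ⟨y, c, hc⟩

theorem Nat.Prime.pos_of_eq_sq_add_three_mul_sq {p a b : ℕ} (hp : p.Prime) (h : p % 3 = 1)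
    (hab : p = a ^ 2 + 3 * b ^ 2) : 0 < a ∧ 0 < b := by
  refine ⟨Nat.pos_of_ne_zero ?_, Nat.pos_of_ne_zero ?_⟩
  · rintro rfl
    have := (Nat.prime_dvd_prime_iff_eq Nat.prime_three hp).mp ⟨b ^ 2, by simpa using hab⟩
    omega
  · rintro rfl
    exact Irreducible.not_isSquare hp ⟨a, by simpa [sq] using hab⟩

theorem Int.eq_of_sq_add_three_mul_sq_eq {p a b c d : ℤ} (hp : Prime p)
    (ha : 0 < a) (hb : 0 < b) (hc : 0 < c) (hd : 0 < d)
    (h₁ : p = a ^ 2 + 3 * b ^ 2) (h₂ : p = c ^ 2 + 3 * d ^ 2) : a = c ∧ b = d := by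
  have hp0 : 0 < p := by nlinarith
  have hdvd : p ∣ (a * d - b * c) * (a * d + b * c) :=
    ⟨d ^ 2 - b ^ 2, by linear_combination -d ^ 2 * h₁ + b ^ 2 * h₂⟩
  have hplus : ¬ p ∣ a * d + b * c := by
    intro h
    have hle : p ≤ a * d + b * c := Int.le_of_dvd (by positivity) h
    have hid : p ^ 2 = (a * c - 3 * b * d) ^ 2 + 3 * (a * d + b * c) ^ 2 := by
      linear_combination p * h₂ + (c ^ 2 + 3 * d ^ 2) * h₁
    nlinarith [sq_nonneg (a * c - 3 * b * d)]
  have hminus : a * d - b * c = 0 := by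
    refine Int.eq_zero_of_abs_lt_dvd ((hp.dvd_or_dvd hdvd).resolve_right hplus)
      (abs_lt_of_sq_lt_sq ?_ hp0.le)
    have hid : p ^ 2 = (a * c + 3 * b * d) ^ 2 + 3 * (a * d - b * c) ^ 2 := by
      linear_combination p * h₂ + (c ^ 2 + 3 * d ^ 2) * h₁
    nlinarith [sq_nonneg (a * c + 3 * b * d), sq_nonneg (a * d - b * c)]
  have hbd : b = d := by
    refine ((sq_eq_sq₀ hb.le hd.le).mp (mul_left_cancel₀ hp0.ne' ?_))
    linear_combination b ^ 2 * h₂ - d ^ 2 * h₁ - (a * d + b * c) * hminus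
  subst hbd
  exact ⟨(sq_eq_sq₀ ha.le hc.le).mp (by linarith), rfl⟩

theorem Nat.Prime.mod_three_eq_one_of_eq_sq_add_three_mul_sq {p x y : ℕ} (hp : p.Prime)
    (hx : 0 < x) (hy : 0 < y) (h : p = x ^ 2 + 3 * y ^ 2) : p % 3 = 1 := by
  have hp3 : ¬ 3 ∣ p := fun h3 => by
    have := (Nat.prime_dvd_prime_iff_eq Nat.prime_three hp).mp h3
    nlinarith [Nat.one_le_pow 2 x hx, Nat.one_le_pow 2 y hy]
  have hmod : x ^ 2 % 3 = (x % 3) ^ 2 % 3 := Nat.pow_mod x 2 3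
  have hlt : x % 3 < 3 := Nat.mod_lt x (by norm_num)
  interval_cases x % 3 <;> omega

theorem prime_one_mod_three_iff_unique_rep (p : ℕ) (hp : p.Prime) :
    p % 3 = 1 ↔
      ∃! xy : ℕ × ℕ, 0 < xy.1 ∧ 0 < xy.2 ∧ p = xy.1 ^ 2 + 3 * xy.2 ^ 2 := by
  constructor
  · intro h
    obtain ⟨a, b, hab⟩ := hp.exists_eq_sq_add_three_mul_sq h
    have habN : p = a.natAbs ^ 2 + 3 * b.natAbs ^ 2 := by
      zify
      rw [sq_abs, sq_abs, hab]
    obtain ⟨ha, hb⟩ := hp.pos_of_eq_sq_add_three_mul_sq h habN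
    refine ⟨(a.natAbs, b.natAbs), ⟨ha, hb, habN⟩, ?_⟩
    rintro ⟨c, d⟩ ⟨hc, hd, hcd⟩
    obtain ⟨hca, hdb⟩ := Int.eq_of_sq_add_three_mul_sq_eq (Nat.prime_iff_prime_int.mp hp)
      (Int.natCast_pos.mpr hc) (Int.natCast_pos.mpr hd) (Int.natCast_pos.mpr ha)
      (Int.natCast_pos.mpr hb) (by exact_mod_cast hcd) (by exact_mod_cast habN)
    exact Prod.ext (by exact_mod_cast hca) (by exact_mod_cast hdb)
  · rintro ⟨⟨x, y⟩, ⟨hx, hy, hxy⟩, -⟩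
    exact hp.mod_three_eq_one_of_eq_sq_add_three_mul_sq hx hy hxy
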